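/- Let E be a field of characteristic different from 2, let π ∈ E^×, and let r be a positive integer. Let w be a ℤ-valuation on the rational function field E(X) with w(2) = 0 such that w(X) < 0 ≤ w(π) < r, and assume that −1 is a square in the residue field κ_w of w. Then the binary quadratic form ⟨X^{r+1} + π, X(X^r + π)⟩ is isotropic over the completion E(X)_w of E(X) with respect to w. -/

import Mathlib

/-!
Conventions used throughout this file.

* `ℤ`-valuations.  We use valuations with values in the multiplicative value group
  `Zm0 := WithZero (Multiplicative ℤ)` (Mathlib's `ℤₘ₀`).  The *additive* value `n : ℤ`
  of the paper corresponds to the multiplicative value `ofAdd (-n)`, so additive value `0`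
  corresponds to `(1 : Zm0)`, the valuation ring of `v` is `{x | v x ≤ 1}`, and
  additive inequalities get reversed.  A `ℤ`-valuation (a valuation with value group `ℤ`)
  is a `v : Valuation K Zm0` that is surjective.

* The valuation ring of `v` is `v.valuationSubring`, and the residue field `κ_v` is
  `IsLocalRing.ResidueField v.valuationSubring`.
-/

open Multiplicative

local notation "Zm0" => WithZero (Multiplicative ℤ)

universe u

/-- The diagonal quadratic form `⟨a 0, …, a (n-1)⟩` with coefficients in `K` is isotropic
over the completion `K_w` of `K` with respect to the valuation `w`. -/
def IsotropicOverCompletion {K : Type*} [Field K] {n : ℕ}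
    (w : Valuation K Zm0) (a : Fin n → K) : Prop :=
  haveI : Valued K Zm0 := Valued.mk' w
  ∃ y : Fin n → UniformSpace.Completion K, y ≠ 0 ∧
    ∑ i, (a i : UniformSpace.Completion K) * y i ^ 2 = 0

section Helpers

private lemma zm0_le_of_lt_one {x : Zm0} (h : x < 1) :
    x ≤ ((ofAdd (-1 : ℤ) : Multiplicative ℤ) : Zm0) := by
  rcases eq_or_ne x 0 with rfl | hx
  · exact zero_le'
  · obtain ⟨m, rfl⟩ := WithZero.ne_zero_iff_exists.mp hx
    rw [← WithZero.coe_one, WithZero.coe_lt_coe] at h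
    rw [WithZero.coe_le_coe]
    have hlt : toAdd m < 0 := by
      show toAdd m < toAdd (1 : Multiplicative ℤ)
      exact Multiplicative.toAdd_lt.mpr h
    rw [← Multiplicative.toAdd_le, toAdd_ofAdd]
    omega

private lemma zm0_exists_lt {γ : Zm0} (h : γ ≠ 0) :
    ∃ N : ℕ, ((ofAdd (-(N + 1) : ℤ) : Multiplicative ℤ) : Zm0) < γ := by
  obtain ⟨m, rfl⟩ := WithZero.ne_zero_iff_exists.mp h
  refine ⟨(-(toAdd m)).toNat, ?_⟩
  rw [WithZero.coe_lt_coe, ← Multiplicative.toAdd_lt, toAdd_ofAdd]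
  omega

private lemma zm0_d_le {m n : ℕ} (h : m ≤ n) :
    ((ofAdd (-(n + 1) : ℤ) : Multiplicative ℤ) : Zm0)
      ≤ ((ofAdd (-(m + 1) : ℤ) : Multiplicative ℤ) : Zm0) := by
  rw [WithZero.coe_le_coe, Multiplicative.ofAdd_le]
  omega

private lemma zm0_d_lt_one (n : ℕ) :
    ((ofAdd (-(n + 1) : ℤ) : Multiplicative ℤ) : Zm0) < 1 := by
  rw [← WithZero.coe_one, WithZero.coe_lt_coe, ← ofAdd_zero, Multiplicative.ofAdd_lt]
  omega

/-- Newton/Hensel iteration: in a complete valued field with `v 2 = 1`, an element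
that is close to a square of a unit is a square. -/
private theorem exists_sqrt {L : Type*} [Field L] [Valued L Zm0] [CompleteSpace L]
    (two : Valued.v (2 : L) = 1) {c y₀ : L} (hy : Valued.v y₀ = 1)
    (hc : Valued.v (c - y₀ ^ 2) < 1) : ∃ s : L, s ^ 2 = c := by
  set v := (Valued.v : Valuation L Zm0) with hv
  set d : ℕ → Zm0 := fun n => ((ofAdd (-(n + 1) : ℤ) : Multiplicative ℤ) : Zm0) with hd
  set f : ℕ → L := fun n => Nat.rec y₀ (fun _ y => y + (c - y ^ 2) / (2 * y)) n with hf
  have hf0 : f 0 = y₀ := rfl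
  have hfs : ∀ n, f (n + 1) = f n + (c - f n ^ 2) / (2 * f n) := fun n => rfl
  have h20 : (2 : L) ≠ 0 := by
    rw [← v.ne_zero_iff, two]; exact one_ne_zero
  have key : ∀ n, v (f n) = 1 ∧ v (c - f n ^ 2) ≤ d n := by
    intro n
    induction n with
    | zero =>
      refine ⟨hy, ?_⟩
      have := zm0_le_of_lt_one hc
      simpa [hd, hf0] using this
    | succ n ih =>
      obtain ⟨h1, h2⟩ := ih
      have hy0 : f n ≠ 0 := by
        rw [← v.ne_zero_iff, h1]; exact one_ne_zero
      have hvh : v ((c - f n ^ 2) / (2 * f n)) = v (c - f n ^ 2) := by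
        rw [v.map_div, v.map_mul, two, h1, one_mul, div_one]
      have hlt : v ((c - f n ^ 2) / (2 * f n)) < v (f n) := by
        rw [hvh, h1]
        exact lt_of_le_of_lt h2 (zm0_d_lt_one n)
      have hfn1 : v (f (n + 1)) = 1 := by
        rw [hfs n, v.map_add_eq_of_lt_left hlt, h1]
      have halg : c - f (n + 1) ^ 2 = -(((c - f n ^ 2) / (2 * f n)) ^ 2) := by
        rw [hfs n]
        field_simp
        ring
      refine ⟨hfn1, ?_⟩
      rw [halg, v.map_neg, v.map_pow, hvh]
      calc v (c - f n ^ 2) ^ 2 ≤ d n ^ 2 := pow_le_pow_left' h2 2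
        _ ≤ d (n + 1) := by
            rw [hd]
            rw [← WithZero.coe_pow, WithZero.coe_le_coe, pow_two, ← ofAdd_add,
              Multiplicative.ofAdd_le]
            omega
  have hstep : ∀ n, v (f (n + 1) - f n) ≤ d n := by
    intro n
    rw [hfs n, add_sub_cancel_left]
    calc v ((c - f n ^ 2) / (2 * f n)) = v (c - f n ^ 2) := by
          rw [v.map_div, v.map_mul, two, (key n).1, one_mul, div_one]
      _ ≤ d n := (key n).2
  have tele : ∀ m n, m ≤ n → v (f n - f m) ≤ d m := by
    intro m n h
    induction n, h using Nat.le_induction with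
    | base => simp
    | succ n hmn ih =>
      have heq : f (n + 1) - f m = (f (n + 1) - f n) + (f n - f m) := by ring
      rw [heq]
      refine le_trans (v.map_add _ _) (max_le ?_ ih)
      exact le_trans (hstep n) (zm0_d_le hmn)
  have cauchy : CauchySeq f := by
    rw [(Valued.hasBasis_uniformity L Zm0).cauchySeq_iff]
    intro γ _
    obtain ⟨N, hN⟩ := zm0_exists_lt (γ := MonoidWithZeroHom.ValueGroup₀.embedding γ.1) (γ.isUnit.map _).ne_zero
    refine ⟨N, fun m hm n hn => ?_⟩
    have hdm : ∀ k, N ≤ k → d k < MonoidWithZeroHom.ValueGroup₀.embedding γ.1 := fun k hk =>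
      lt_of_le_of_lt (zm0_d_le hk) hN
    simp only [Set.mem_setOf_eq, Valuation.restrict_lt_iff_lt_embedding, ← hv]
    rcases le_total m n with h | h
    · exact lt_of_le_of_lt (tele m n h) (hdm m hm)
    · rw [v.map_sub_swap]
      exact lt_of_le_of_lt (tele n m h) (hdm n hn)
  obtain ⟨s, hs⟩ := cauchySeq_tendsto_of_complete cauchy
  have lim1 : Filter.Tendsto (fun n => c - f n ^ 2) Filter.atTop (nhds (c - s ^ 2)) :=
    Filter.Tendsto.sub tendsto_const_nhds (hs.pow 2)
  have lim0 : Filter.Tendsto (fun n => c - f n ^ 2) Filter.atTop (nhds 0) := by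
    rw [(Valued.hasBasis_nhds_zero L Zm0).tendsto_right_iff]
    intro γ _
    obtain ⟨N, hN⟩ := zm0_exists_lt (γ := MonoidWithZeroHom.ValueGroup₀.embedding γ.1) (γ.isUnit.map _).ne_zero
    filter_upwards [Filter.eventually_ge_atTop N] with n hn
    simp only [Set.mem_setOf_eq, Valuation.restrict_lt_iff_lt_embedding]
    exact lt_of_le_of_lt (le_trans (key n).2 (zm0_d_le hn)) hN
  have hcs : c - s ^ 2 = 0 := tendsto_nhds_unique lim1 lim0
  exact ⟨s, (sub_eq_zero.mp hcs).symm⟩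

end Helpers


private theorem statement8_aux {K : Type u} [Field K] [Valued K Zm0]
    (h2 : Valued.v (2 : K) = 1) (a b c y₀ : K)
    (habc : a * c + b = 0)
    (hwy₀ : Valued.v y₀ = 1) (hlt : Valued.v (c - y₀ ^ 2) < 1) :
    ∃ y : Fin 2 → UniformSpace.Completion K, y ≠ 0 ∧
      ∑ i, ((![a, b]) i : UniformSpace.Completion K) * y i ^ 2 = 0 := by
  have two' : (Valued.v : Valuation (UniformSpace.Completion K) Zm0) (2 : UniformSpace.Completion K) = 1 := by
    have h : ((2 : K) : UniformSpace.Completion K) = (2 : UniformSpace.Completion K) := by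
      rw [show (2 : K) = 1 + 1 from by norm_num, UniformSpace.Completion.coe_add,
        UniformSpace.Completion.coe_one]
      norm_num
    rw [← h, Valued.valuedCompletion_apply]
    exact h2
  have hy' : (Valued.v : Valuation (UniformSpace.Completion K) Zm0)
      ((y₀ : K) : UniformSpace.Completion K) = 1 := by
    rw [Valued.valuedCompletion_apply]
    exact hwy₀
  have hc' : (Valued.v : Valuation (UniformSpace.Completion K) Zm0)
      (((c : K) : UniformSpace.Completion K) - ((y₀ : K) : UniformSpace.Completion K) ^ 2) < 1 := by
    have h : ((c : K) : UniformSpace.Completion K) - ((y₀ : K) : UniformSpace.Completion K) ^ 2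
        = ((c - y₀ ^ 2 : K) : UniformSpace.Completion K) := by
      simp only [sq, UniformSpace.Completion.coe_sub, UniformSpace.Completion.coe_mul]
    rw [h, Valued.valuedCompletion_apply]
    exact hlt
  obtain ⟨s, hs⟩ := exists_sqrt two' hy' hc'
  refine ⟨![s, 1], ?_, ?_⟩
  · intro h0
    have h1 := congrFun h0 1
    simp at h1
  · rw [Fin.sum_univ_two]
    simp only [Matrix.cons_val_zero, Matrix.cons_val_one, Matrix.head_cons]
    rw [hs]
    have h : ((a : K) : UniformSpace.Completion K) * ((c : K) : UniformSpace.Completion K)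
        + ((b : K) : UniformSpace.Completion K) * 1 ^ 2
        = ((a * c + b : K) : UniformSpace.Completion K) := by
      simp only [one_pow, mul_one, UniformSpace.Completion.coe_add,
        UniformSpace.Completion.coe_mul]
    rw [h, habc]
    exact UniformSpace.Completion.coe_zero

/-- Case 3 of the main theorem. Let `E` be a field of characteristic
`≠ 2`, `π ∈ Eˣ`, `r ≥ 1`, and `w` a `ℤ`-valuation on `E(X)` with `w 2 = 0`,
`w X < 0` (multiplicatively `1 < w X`) and `0 ≤ w π < r` (multiplicatively
`ofAdd (-r) < w π ≤ 1`), such that `-1` is a square in the residue field `κ_w`.  Then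
`⟨X^(r+1) + π, X (X^r + π)⟩` is isotropic over `E(X)_w`. -/
theorem statement8 {E : Type u} [Field E] (hchar : ringChar E ≠ 2)
    (π : E) (hπ0 : π ≠ 0) (r : ℕ) (hr : 0 < r)
    (w : Valuation (RatFunc E) Zm0) (hwZ : Function.Surjective w)
    (h2 : w 2 = 1)
    (hX : 1 < w RatFunc.X)
    (hπ_nonneg : w (RatFunc.C π) ≤ 1)
    (hπ_lt : ((ofAdd (-(r : ℤ)) : Multiplicative ℤ) : Zm0) < w (RatFunc.C π))
    (hres : IsSquare (-1 : IsLocalRing.ResidueField w.valuationSubring)) :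
    IsotropicOverCompletion w
      ![RatFunc.X ^ (r + 1) + RatFunc.C π,
        RatFunc.X * (RatFunc.X ^ r + RatFunc.C π)] := by
  classical
  letI : Valued (RatFunc E) Zm0 := Valued.mk' w
  set X : (RatFunc E) := RatFunc.X with hXdef
  set P : (RatFunc E) := RatFunc.C π with hPdef
  set a : (RatFunc E) := X ^ (r + 1) + P with hadef
  set b : (RatFunc E) := X * (X ^ r + P) with hbdef
  -- basic valuation facts
  have hX0 : w X ≠ 0 := ne_of_gt (lt_trans zero_lt_one hX)
  have hXr1 : (1 : Zm0) < w X ^ (r + 1) := one_lt_pow' hX (Nat.succ_ne_zero r)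
  have hXr : (1 : Zm0) < w X ^ r := one_lt_pow' hX hr.ne'
  have ha : w a = w X ^ (r + 1) := by
    rw [hadef, w.map_add_eq_of_lt_left, map_pow]
    rw [map_pow]
    exact lt_of_le_of_lt hπ_nonneg hXr1
  have hb' : w (X ^ r + P) = w X ^ r := by
    rw [w.map_add_eq_of_lt_left, map_pow]
    rw [map_pow]
    exact lt_of_le_of_lt hπ_nonneg hXr
  have hb : w b = w X ^ (r + 1) := by
    rw [hbdef, w.map_mul, hb', pow_succ, mul_comm]
  have ha0 : a ≠ 0 := by
    rw [← w.ne_zero_iff, ha]; exact pow_ne_zero _ hX0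
  have hb0 : b ≠ 0 := by
    rw [← w.ne_zero_iff, hb]; exact pow_ne_zero _ hX0
  set c : (RatFunc E) := -(b / a) with hcdef
  have hwc : w c = 1 := by
    rw [hcdef, w.map_neg, w.map_div, ha, hb, div_self (pow_ne_zero _ hX0)]
  -- w (c + 1) < 1
  have hc1 : w (c + 1) < 1 := by
    have key2 : c + 1 = P * (1 - X) / a := by
      rw [eq_div_iff ha0, hcdef, add_mul, neg_mul, div_mul_cancel₀ _ ha0, hadef, hbdef]
      ring
    have h1X : w (1 - X) = w X := by
      rw [sub_eq_add_neg, w.map_add_eq_of_lt_right, w.map_neg]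
      rw [w.map_neg, w.map_one]
      exact hX
    rw [key2, w.map_div, w.map_mul, ha, h1X]
    rw [div_lt_iff₀ (zero_lt_iff.mpr (pow_ne_zero _ hX0)), one_mul, pow_succ]
    calc w P * w X = w X * w P := mul_comm _ _
      _ < w X * w X ^ r := mul_lt_mul_of_pos_left (lt_of_le_of_lt hπ_nonneg hXr)
          (zero_lt_iff.mpr hX0)
      _ = w X ^ r * w X := mul_comm _ _
  -- residue field argument
  set O := w.valuationSubring with hOdef
  have hInt : w.Integers O :=
    ⟨Subtype.coe_injective, fun x => x.2, fun x hx => ⟨⟨x, hx⟩, rfl⟩⟩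
  obtain ⟨t, ht⟩ := hres
  have ht0 : t ≠ 0 := by
    intro h
    rw [h, mul_zero] at ht
    exact (neg_ne_zero.mpr (one_ne_zero)) ht
  obtain ⟨y₀', hy₀'⟩ := IsLocalRing.residue_surjective (R := O) t
  have hy₀u : IsUnit y₀' := (IsLocalRing.residue_ne_zero_iff_isUnit _).mp (hy₀' ▸ ht0)
  have hwy₀ : w (y₀' : RatFunc E) = 1 := hInt.one_of_isUnit hy₀u
  set y₀ : (RatFunc E) := (y₀' : RatFunc E) with hy₀def
  have hcO : c ∈ O := by
    rw [Valuation.mem_valuationSubring_iff, hwc]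
  set C : O := ⟨c, hcO⟩ with hCdef
  have hC1mem : (C + 1 : O) ∈ IsLocalRing.maximalIdeal O := by
    rw [IsLocalRing.mem_maximalIdeal, mem_nonunits_iff, hInt.isUnit_iff_valuation_eq_one]
    have : w ((algebraMap O (RatFunc E)) (C + 1)) = w (c + 1) := rfl
    rw [this]
    exact ne_of_lt hc1
  have hres0 : IsLocalRing.residue O (C + 1) = 0 :=
    (IsLocalRing.residue_eq_zero_iff _).mpr hC1mem
  have hres2 : IsLocalRing.residue O (C - y₀' ^ 2) = 0 := by
    have e1 : IsLocalRing.residue O (C - y₀' ^ 2)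
        = IsLocalRing.residue O C - t ^ 2 := by
      rw [map_sub, map_pow, hy₀']
    have e2 : t ^ 2 = (-1 : IsLocalRing.ResidueField O) := by
      rw [sq, ← ht]
    rw [e1, e2, sub_neg_eq_add, ← map_one (IsLocalRing.residue O), ← map_add, hres0]
  have hmem2 : (C - y₀' ^ 2) ∈ IsLocalRing.maximalIdeal O :=
    (IsLocalRing.residue_eq_zero_iff _).mp hres2
  have hlt : w (c - y₀ ^ 2) < 1 := by
    rw [IsLocalRing.mem_maximalIdeal, mem_nonunits_iff, hInt.isUnit_iff_valuation_eq_one] at hmem2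
    have hco : (algebraMap O (RatFunc E)) (C - y₀' ^ 2) = c - y₀ ^ 2 := rfl
    rw [hco] at hmem2
    have hle : w (c - y₀ ^ 2) ≤ 1 := by
      rw [← hco]
      exact (C - y₀' ^ 2).2
    exact lt_of_le_of_ne hle hmem2
  -- pass to the completion
  have habc : a * c + b = 0 := by
    rw [hcdef]
    field_simp
    ring
  unfold IsotropicOverCompletion
  exact @statement8_aux (RatFunc E) _ (Valued.mk' w) h2 a b c y₀ habc hwy₀ hlt
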